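/- arXiv:1809.11012 — 2 statements merged into one kernel-verified Lean document; each statement's English description precedes it below -/
import Mathlib

section
/- Let κ > 0 and let u : [0,∞) → ℝ be twice continuously differentiable with u(0) = 0 and u'(0) = 0, such that for every k ∈ ℕ the functions t ↦ e^{−κt} t^k u(t), t ↦ e^{−κt} t^k u'(t) and t ↦ e^{−κt} t^k u''(t) are integrable on (0,∞) and e^{−κt} t^k u(t) → 0 and e^{−κt} t^k u'(t) → 0 as t → ∞. Then for every n ∈ ℕ, ∫_0^∞ e^{−κt} L_n(κt) u''(t) dt = κ² ∑_{m=0}^{n} (n−m+1) u_m, where u_m = ∫_0^∞ e^{−κt} L_m(κt) u(t) dt. Equivalently, ∫_0^∞ e^{−κt} L_n(κt) u''(t) dt = κ² u_n + ∑_{m=0}^{n−1} κ²(n−m+1) u_m. -/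
open Real Filter MeasureTheory


/-- Laguerre polynomial L_n(x) = ∑_{k=0}^n (−1)^k (n choose k) x^k / k! -/
noncomputable def lagPoly (n : ℕ) (x : ℝ) : ℝ :=
  ∑ k ∈ Finset.range (n + 1), (-1 : ℝ) ^ k * (n.choose k : ℝ) * x ^ k / (k.factorial : ℝ)

/-!
Two integrations by parts on `(0, ∞)` move both derivatives from `u` onto the Laguerre function
`ℓₙ(t) = e^{-κt} Lₙ(κt)`; the boundary terms vanish at `0` because `u(0) = u'(0) = 0` and at `∞`
by the decay hypotheses, since every `ℓₘ` is `e^{-κt}` times a polynomial. The classical identity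
`Lₙ' = -∑_{m<n} Lₘ` gives `ℓₙ' = -κ ∑_{m≤n} ℓₘ`, and differentiating once more,
`ℓₙ'' = κ² ∑_{m≤n} (n - m + 1) ℓₘ`.
-/

open Finset Topology

lemma lagPoly_eq_sum (n : ℕ) (x : ℝ) :
    lagPoly n x = ∑ k ∈ range (n + 1), (n.choose k : ℝ) * ((-x) ^ k / k.factorial) := by
  refine sum_congr rfl fun k _ => ?_
  rw [neg_pow]
  ring

lemma sum_range_lagPoly (n : ℕ) (x : ℝ) :
    ∑ m ∈ range n, lagPoly m x
      = ∑ k ∈ range n, (n.choose (k + 1) : ℝ) * ((-x) ^ k / k.factorial) := by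
  induction n with
  | zero => simp
  | succ n ih =>
    have hext : ∑ k ∈ range n, (n.choose (k + 1) : ℝ) * ((-x) ^ k / k.factorial)
        = ∑ k ∈ range (n + 1), (n.choose (k + 1) : ℝ) * ((-x) ^ k / k.factorial) := by
      simp [sum_range_succ]
    rw [sum_range_succ, ih, hext, lagPoly_eq_sum, ← sum_add_distrib]
    refine sum_congr rfl fun k _ => ?_
    rw [Nat.choose_succ_succ' n k, Nat.cast_add]
    ring

lemma hasDerivAt_lagPoly (n : ℕ) (x : ℝ) :
    HasDerivAt (lagPoly n) (-∑ m ∈ range n, lagPoly m x) x := by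
  have hterm (k : ℕ) : HasDerivAt (fun y : ℝ => (-y) ^ (k + 1) / (k + 1).factorial)
      (-((-x) ^ k / k.factorial)) x := by
    refine (((hasDerivAt_neg x).pow (k + 1)).div_const _).congr_deriv ?_
    rw [Nat.factorial_succ, Nat.cast_mul]
    field_simp
    push_cast
    ring
  have hsum := HasDerivAt.fun_sum (u := range n) fun k _ =>
    (hterm k).const_mul (n.choose (k + 1) : ℝ)
  have hfun : lagPoly n = fun y => 1 + ∑ k ∈ range n,
      (n.choose (k + 1) : ℝ) * ((-y) ^ (k + 1) / (k + 1).factorial) := by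
    funext y
    rw [lagPoly_eq_sum, sum_range_succ']
    simp [add_comm]
  rw [hfun, sum_range_lagPoly, ← sum_neg_distrib]
  exact (hsum.const_add 1).congr_deriv (by simp only [mul_neg])

lemma sum_range_succ_sum_range_succ {M : Type*} [AddCommMonoid M] (n : ℕ) (a : ℕ → M) :
    ∑ m ∈ range (n + 1), ∑ j ∈ range (m + 1), a j = ∑ j ∈ range (n + 1), (n - j + 1) • a j := by
  simp only [range_eq_Ico]
  rw [← sum_Ico_Ico_comm]
  refine sum_congr rfl fun j hj => ?_
  rw [sum_const, Nat.card_Ico]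
  congr 1
  have := (mem_Ico.mp hj).2
  omega

noncomputable def laguerreFun (κ : ℝ) (n : ℕ) (t : ℝ) : ℝ := exp (-κ * t) * lagPoly n (κ * t)

lemma hasDerivAt_laguerreFun (κ : ℝ) (n : ℕ) (t : ℝ) :
    HasDerivAt (laguerreFun κ n) (∑ m ∈ range (n + 1), -κ * laguerreFun κ m t) t := by
  have hexp : HasDerivAt (fun s => exp (-κ * s)) (exp (-κ * t) * -κ) t := by
    simpa using ((hasDerivAt_id t).const_mul (-κ)).exp
  have hlag : HasDerivAt (fun s => lagPoly n (κ * s)) (-(∑ m ∈ range n, lagPoly m (κ * t)) * κ) t :=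
    (hasDerivAt_lagPoly n (κ * t)).comp t (by simpa using (hasDerivAt_id t).const_mul κ)
  refine (hexp.mul hlag).congr_deriv ?_
  simp only [laguerreFun, sum_range_succ, ← mul_sum]
  ring

lemma hasDerivAt_deriv_laguerreFun (κ : ℝ) (n : ℕ) (t : ℝ) :
    HasDerivAt (fun s => ∑ m ∈ range (n + 1), -κ * laguerreFun κ m s)
      (∑ m ∈ range (n + 1), κ ^ 2 * ((n - m + 1 : ℕ) : ℝ) * laguerreFun κ m t) t := by
  refine (HasDerivAt.fun_sum fun m _ =>
    (hasDerivAt_laguerreFun κ m t).const_mul (-κ)).congr_deriv ?_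
  simp only [mul_sum, sum_range_succ_sum_range_succ, nsmul_eq_mul]
  refine sum_congr rfl fun m _ => ?_
  ring

lemma laguerreFun_mul_eq_sum (κ : ℝ) (m : ℕ) (f : ℝ → ℝ) (t : ℝ) :
    laguerreFun κ m t * f t = ∑ k ∈ range (m + 1),
      (-1) ^ k * m.choose k * κ ^ k / k.factorial * (exp (-κ * t) * t ^ k * f t) := by
  simp only [laguerreFun, lagPoly, mul_sum, sum_mul]
  refine sum_congr rfl fun k _ => ?_
  ring

section

variable {κ : ℝ} {f : ℝ → ℝ}

lemma integrableOn_laguerreFun_mul {s : Set ℝ}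
    (hf : ∀ k : ℕ, IntegrableOn (fun t => exp (-κ * t) * t ^ k * f t) s) (m : ℕ) :
    IntegrableOn (fun t => laguerreFun κ m t * f t) s := by
  simp only [laguerreFun_mul_eq_sum κ m f]
  exact integrable_finsetSum _ fun k _ => (hf k).const_mul _

lemma tendsto_laguerreFun_mul {l : Filter ℝ}
    (hf : ∀ k : ℕ, Tendsto (fun t => exp (-κ * t) * t ^ k * f t) l (𝓝 0)) (m : ℕ) :
    Tendsto (fun t => laguerreFun κ m t * f t) l (𝓝 0) := by
  simp only [laguerreFun_mul_eq_sum κ m f]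
  simpa using tendsto_finsetSum _ fun k _ => (hf k).const_mul
    ((-1) ^ k * m.choose k * κ ^ k / k.factorial)

lemma integrableOn_sum_laguerreFun_mul {s : Set ℝ}
    (hf : ∀ k : ℕ, IntegrableOn (fun t => exp (-κ * t) * t ^ k * f t) s) (I : Finset ℕ)
    (c : ℕ → ℝ) :
    IntegrableOn (fun t => (∑ m ∈ I, c m * laguerreFun κ m t) * f t) s := by
  simp only [sum_mul, mul_assoc]
  exact integrable_finsetSum _ fun m _ => (integrableOn_laguerreFun_mul hf m).const_mul _

lemma tendsto_sum_laguerreFun_mul {l : Filter ℝ}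
    (hf : ∀ k : ℕ, Tendsto (fun t => exp (-κ * t) * t ^ k * f t) l (𝓝 0)) (I : Finset ℕ)
    (c : ℕ → ℝ) :
    Tendsto (fun t => (∑ m ∈ I, c m * laguerreFun κ m t) * f t) l (𝓝 0) := by
  simp only [sum_mul, mul_assoc]
  simpa using tendsto_finsetSum _ fun m _ => (tendsto_laguerreFun_mul hf m).const_mul (c m)

lemma integral_sum_laguerreFun_mul {s : Set ℝ}
    (hf : ∀ k : ℕ, IntegrableOn (fun t => exp (-κ * t) * t ^ k * f t) s) (I : Finset ℕ)
    (c : ℕ → ℝ) :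
    ∫ t in s, (∑ m ∈ I, c m * laguerreFun κ m t) * f t
      = ∑ m ∈ I, c m * ∫ t in s, laguerreFun κ m t * f t := by
  simp only [sum_mul, mul_assoc]
  rw [integral_finsetSum _ fun m _ => (integrableOn_laguerreFun_mul hf m).const_mul _]
  simp only [integral_const_mul]

end

theorem integral_Ioi_mul_deriv_deriv_eq_deriv_deriv_mul {a : ℝ} {u u' u'' v v' v'' : ℝ → ℝ}
    (hu : ∀ x ∈ Set.Ioi a, HasDerivAt u (u' x) x) (hu' : ∀ x ∈ Set.Ioi a, HasDerivAt u' (u'' x) x)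
    (hv : ∀ x ∈ Set.Ioi a, HasDerivAt v (v' x) x) (hv' : ∀ x ∈ Set.Ioi a, HasDerivAt v' (v'' x) x)
    (huv'' : IntegrableOn (u * v'') (Set.Ioi a)) (hu'v' : IntegrableOn (u' * v') (Set.Ioi a))
    (hu''v : IntegrableOn (u'' * v) (Set.Ioi a))
    (h_zero : Tendsto (u * v') (𝓝[>] a) (𝓝 0)) (h_zero' : Tendsto (u' * v) (𝓝[>] a) (𝓝 0))
    (h_infty : Tendsto (u * v') atTop (𝓝 0)) (h_infty' : Tendsto (u' * v) atTop (𝓝 0)) :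
    ∫ x in Set.Ioi a, u x * v'' x = ∫ x in Set.Ioi a, u'' x * v x := by
  rw [integral_Ioi_mul_deriv_eq_deriv_mul hu hv' huv'' hu'v' h_zero h_infty,
    integral_Ioi_mul_deriv_eq_deriv_mul hu' hv hu'v' hu''v h_zero' h_infty']
  ring

lemma tendsto_mul_nhdsGT_of_continuousWithinAt {a : ℝ} {g f : ℝ → ℝ} (hg : ContinuousAt g a)
    (hf : ContinuousWithinAt f (Set.Ici a) a) (hfa : f a = 0) :
    Tendsto (fun x => g x * f x) (𝓝[>] a) (𝓝 0) := by
  have hf' : Tendsto f (𝓝[>] a) (𝓝 0) :=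
    hfa ▸ (hf.mono Set.Ioi_subset_Ici_self).tendsto
  simpa using (hg.tendsto.mono_left nhdsWithin_le_nhds).mul hf'

theorem laguerre_transform_second_deriv_general (κ : ℝ) (u u' u'' : ℝ → ℝ)
    (hderiv : ∀ t ∈ Set.Ici (0 : ℝ), HasDerivWithinAt u (u' t) (Set.Ici 0) t)
    (hderiv' : ∀ t ∈ Set.Ici (0 : ℝ), HasDerivWithinAt u' (u'' t) (Set.Ici 0) t)
    (hu0 : u 0 = 0) (hu'0 : u' 0 = 0)
    (hint : ∀ k : ℕ, IntegrableOn (fun t => Real.exp (-κ * t) * t ^ k * u t) (Set.Ioi 0))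
    (hint' : ∀ k : ℕ, IntegrableOn (fun t => Real.exp (-κ * t) * t ^ k * u' t) (Set.Ioi 0))
    (hint'' : ∀ k : ℕ, IntegrableOn (fun t => Real.exp (-κ * t) * t ^ k * u'' t) (Set.Ioi 0))
    (hlim : ∀ k : ℕ, Tendsto (fun t => Real.exp (-κ * t) * t ^ k * u t) atTop (nhds 0))
    (hlim' : ∀ k : ℕ, Tendsto (fun t => Real.exp (-κ * t) * t ^ k * u' t) atTop (nhds 0))
    (n : ℕ) :
    (∫ t in Set.Ioi (0 : ℝ), Real.exp (-κ * t) * lagPoly n (κ * t) * u'' t)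
      = κ ^ 2 * (∑ m ∈ Finset.range (n + 1), ((n - m + 1 : ℕ) : ℝ) *
          ∫ t in Set.Ioi (0 : ℝ), Real.exp (-κ * t) * lagPoly m (κ * t) * u t) ∧
    (∫ t in Set.Ioi (0 : ℝ), Real.exp (-κ * t) * lagPoly n (κ * t) * u'' t)
      = κ ^ 2 * (∫ t in Set.Ioi (0 : ℝ), Real.exp (-κ * t) * lagPoly n (κ * t) * u t)
        + ∑ m ∈ Finset.range n, κ ^ 2 * ((n - m + 1 : ℕ) : ℝ) *
            ∫ t in Set.Ioi (0 : ℝ), Real.exp (-κ * t) * lagPoly m (κ * t) * u t := by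
  have hu (t : ℝ) (ht : t ∈ Set.Ioi 0) : HasDerivAt u (u' t) t :=
    (hderiv t (le_of_lt ht)).hasDerivAt (Ici_mem_nhds ht)
  have hu' (t : ℝ) (ht : t ∈ Set.Ioi 0) : HasDerivAt u' (u'' t) t :=
    (hderiv' t (le_of_lt ht)).hasDerivAt (Ici_mem_nhds ht)
  have key : (∫ t in Set.Ioi (0 : ℝ), laguerreFun κ n t * u'' t)
      = ∫ t in Set.Ioi (0 : ℝ),
          (∑ m ∈ range (n + 1), κ ^ 2 * ((n - m + 1 : ℕ) : ℝ) * laguerreFun κ m t) * u t :=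
    integral_Ioi_mul_deriv_deriv_eq_deriv_deriv_mul
      (fun t _ => hasDerivAt_laguerreFun κ n t) (fun t _ => hasDerivAt_deriv_laguerreFun κ n t)
      hu hu' (integrableOn_laguerreFun_mul hint'' n)
      (integrableOn_sum_laguerreFun_mul hint' _ _) (integrableOn_sum_laguerreFun_mul hint _ _)
      (tendsto_mul_nhdsGT_of_continuousWithinAt (hasDerivAt_laguerreFun κ n 0).continuousAt
        (hderiv' 0 Set.self_mem_Ici).continuousWithinAt hu'0)
      (tendsto_mul_nhdsGT_of_continuousWithinAt (hasDerivAt_deriv_laguerreFun κ n 0).continuousAt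
        (hderiv 0 Set.self_mem_Ici).continuousWithinAt hu0)
      (tendsto_laguerreFun_mul hlim' n) (tendsto_sum_laguerreFun_mul hlim _ _)
  rw [integral_sum_laguerreFun_mul hint] at key
  simp only [laguerreFun] at key
  refine ⟨key.trans ?_, key.trans ?_⟩
  · simp only [mul_sum, mul_assoc]
  · rw [sum_range_succ, Nat.sub_self, zero_add, Nat.cast_one, mul_one, add_comm]

/-- Laguerre transform of the second derivative (with u(0) = u'(0) = 0):
∫₀^∞ e^{−κt} L_n(κt) u''(t) dt = κ² ∑_{m=0}^n (n−m+1) u_m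
                               = κ² u_n + ∑_{m=0}^{n−1} κ²(n−m+1) u_m. -/
theorem laguerre_transform_second_deriv (κ : ℝ) (hκ : 0 < κ) (u u' u'' : ℝ → ℝ)
    (hderiv : ∀ t ∈ Set.Ici (0 : ℝ), HasDerivWithinAt u (u' t) (Set.Ici 0) t)
    (hderiv' : ∀ t ∈ Set.Ici (0 : ℝ), HasDerivWithinAt u' (u'' t) (Set.Ici 0) t)
    (hcont : ContinuousOn u'' (Set.Ici 0))
    (hu0 : u 0 = 0) (hu'0 : u' 0 = 0)
    (hint : ∀ k : ℕ, IntegrableOn (fun t => Real.exp (-κ * t) * t ^ k * u t) (Set.Ioi 0))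
    (hint' : ∀ k : ℕ, IntegrableOn (fun t => Real.exp (-κ * t) * t ^ k * u' t) (Set.Ioi 0))
    (hint'' : ∀ k : ℕ, IntegrableOn (fun t => Real.exp (-κ * t) * t ^ k * u'' t) (Set.Ioi 0))
    (hlim : ∀ k : ℕ, Tendsto (fun t => Real.exp (-κ * t) * t ^ k * u t) atTop (nhds 0))
    (hlim' : ∀ k : ℕ, Tendsto (fun t => Real.exp (-κ * t) * t ^ k * u' t) atTop (nhds 0))
    (n : ℕ) :
    (∫ t in Set.Ioi (0 : ℝ), Real.exp (-κ * t) * lagPoly n (κ * t) * u'' t)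
      = κ ^ 2 * (∑ m ∈ Finset.range (n + 1), ((n - m + 1 : ℕ) : ℝ) *
          ∫ t in Set.Ioi (0 : ℝ), Real.exp (-κ * t) * lagPoly m (κ * t) * u t) ∧
    (∫ t in Set.Ioi (0 : ℝ), Real.exp (-κ * t) * lagPoly n (κ * t) * u'' t)
      = κ ^ 2 * (∫ t in Set.Ioi (0 : ℝ), Real.exp (-κ * t) * lagPoly n (κ * t) * u t)
        + ∑ m ∈ Finset.range n, κ ^ 2 * ((n - m + 1 : ℕ) : ℝ) *
            ∫ t in Set.Ioi (0 : ℝ), Real.exp (-κ * t) * lagPoly m (κ * t) * u t :=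
  laguerre_transform_second_deriv_general κ u u' u'' hderiv hderiv' hu0 hu'0 hint hint' hint'' hlim
    hlim' n
end

section
/- Let κ, c_s, c_p > 0, n ∈ ℕ and ℓ ∈ {1,2}. Then there exist ε > 0 and M > 0 such that for all 0 < r < ε, |η̃_{ℓ,n}(r)| ≤ M r²; in particular η̃_{ℓ,n}(r) → 0 as r → 0⁺. -/
open Real Filter MeasureTheory

noncomputable def acoef (γ : ℝ) : ℕ → ℕ → ℝ
  | n, m =>
    if m = 0 then 1
    else if n < m then 0
    else if m = n then -(γ / (n : ℝ)) * acoef γ (n - 1) (n - 1)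
    else (1 / (2 * γ * (m : ℝ))) *
      (4 * (((m + 1) / 2 : ℕ) : ℝ) ^ 2 * acoef γ n (m + 1)
        - γ ^ 2 * ∑ k ∈ (Finset.Icc (m - 1) (n - 1)).attach,
            ((n - (k : ℕ) + 1 : ℕ) : ℝ) * acoef γ (k : ℕ) (m - 1))
  termination_by n m => (n, n - m)
  decreasing_by
  · apply Prod.Lex.left; omega
  · apply Prod.Lex.right; omega
  · apply Prod.Lex.left
    have hk := k.2
    simp only [Finset.mem_Icc] at hk
    omega

/-- χ_{k,n} -/
noncomputable def chiC (n : ℕ) (k : ℤ) : ℝ :=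
  if k = -2 then (n : ℝ) * ((n : ℝ) - 1)
  else if k = -1 then -4 * (n : ℝ) ^ 2
  else if k = 0 then 2 * (3 * (n : ℝ) ^ 2 + 3 * (n : ℝ) + 1)
  else if k = 1 then -4 * ((n : ℝ) + 1) ^ 2
  else if k = 2 then ((n : ℝ) + 1) * ((n : ℝ) + 2)
  else 0

/-- the sum ∑_{k=-2}^{2} χ_{k,n} f(n+k), terms with n+k<0 omitted -/
noncomputable def sumChi (n : ℕ) (f : ℕ → ℝ) : ℝ :=
  ∑ k ∈ Finset.Icc (-2 : ℤ) 2,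
    if 0 ≤ (n : ℤ) + k then chiC n k * f ((n : ℤ) + k).toNat else 0

noncomputable def besselI0 (z : ℝ) : ℝ := ∑' k : ℕ, (z / 2) ^ (2 * k) / (k.factorial : ℝ) ^ 2

noncomputable def besselI1 (z : ℝ) : ℝ :=
  ∑' k : ℕ, (z / 2) ^ (2 * k + 1) / ((k.factorial : ℝ) * ((k + 1).factorial : ℝ))

noncomputable def psiH (k : ℕ) : ℝ := ∑ j ∈ Finset.range k, (1 : ℝ) / ((j : ℝ) + 1)

noncomputable def besselS0 (z : ℝ) : ℝ :=
  ∑' k : ℕ, psiH k * (z / 2) ^ (2 * k) / (k.factorial : ℝ) ^ 2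

noncomputable def besselS1 (z : ℝ) : ℝ :=
  -(1 / 2) * ∑' k : ℕ, (psiH (k + 1) + psiH k) * (z / 2) ^ (2 * k + 1) /
    ((k.factorial : ℝ) * ((k + 1).factorial : ℝ))

noncomputable def vPol (γ : ℝ) (n : ℕ) (r : ℝ) : ℝ :=
  ∑ m ∈ Finset.range (n / 2 + 1), acoef γ n (2 * m) * r ^ (2 * m)

noncomputable def wPol (γ : ℝ) (n : ℕ) (r : ℝ) : ℝ :=
  ∑ m ∈ Finset.range ((n - 1) / 2 + 1), acoef γ n (2 * m + 1) * r ^ (2 * m + 1)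

noncomputable def vTil (γ : ℝ) (n : ℕ) (r : ℝ) : ℝ :=
  2 * ∑ m ∈ Finset.Icc 1 (n / 2), (m : ℝ) * acoef γ n (2 * m) * r ^ (2 * m)
    - γ * ∑ m ∈ Finset.range ((n - 1) / 2 + 1), acoef γ n (2 * m + 1) * r ^ (2 * m + 2)

noncomputable def wTil (γ : ℝ) (n : ℕ) (r : ℝ) : ℝ :=
  2 * ∑ m ∈ Finset.Icc 1 ((n - 1) / 2), (m : ℝ) * acoef γ n (2 * m + 1) * r ^ (2 * m + 1)
    - γ * ∑ m ∈ Finset.range (n / 2 + 1), acoef γ n (2 * m) * r ^ (2 * m + 1)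

noncomputable def phiF (γ : ℝ) (n : ℕ) (r : ℝ) : ℝ :=
  -besselI0 (γ * r) * vPol γ n r + besselI1 (γ * r) * wPol γ n r

noncomputable def phiHat (γ : ℝ) (n : ℕ) (r : ℝ) : ℝ :=
  (-(Real.eulerMascheroniConstant + Real.log (γ / 2)) * besselI0 (γ * r) + besselS0 (γ * r)) * vPol γ n r
    + (1 / (γ * r) + (Real.eulerMascheroniConstant + Real.log (γ / 2)) * besselI1 (γ * r)
        + besselS1 (γ * r)) * wPol γ n r

noncomputable def phiTil (γ : ℝ) (n : ℕ) (r : ℝ) : ℝ :=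
  -besselI0 (γ * r) * vTil γ n r + besselI1 (γ * r) * wTil γ n r

noncomputable def phiHatTil (γ : ℝ) (n : ℕ) (r : ℝ) : ℝ :=
  (-(Real.eulerMascheroniConstant + Real.log (γ / 2)) * besselI0 (γ * r) + besselS0 (γ * r)) * vTil γ n r
    + (1 / (γ * r) + (Real.eulerMascheroniConstant + Real.log (γ / 2)) * besselI1 (γ * r)
        + besselS1 (γ * r)) * wTil γ n r

noncomputable def etaF (κ cs cp : ℝ) (ℓ n : ℕ) (r : ℝ) : ℝ :=
  (-(ℓ : ℝ)) ^ (ℓ - 1) / (κ ^ 2 * r ^ 2) *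
      sumChi n (fun j => phiF (κ / cs) j r - phiF (κ / cp) j r)
    + (-1 : ℝ) ^ (ℓ - 1) / cp ^ 2 * phiF (κ / cp) n r
    + ((ℓ : ℝ) - 1) / cs ^ 2 * phiF (κ / cs) n r

noncomputable def xiF (κ cs cp : ℝ) (ℓ n : ℕ) (r : ℝ) : ℝ :=
  (-(ℓ : ℝ)) ^ (ℓ - 1) / (κ ^ 2 * r ^ 2) *
      sumChi n (fun j => phiHat (κ / cs) j r - phiHat (κ / cp) j r)
    + (-1 : ℝ) ^ (ℓ - 1) / cp ^ 2 * phiHat (κ / cp) n r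
    + ((ℓ : ℝ) - 1) / cs ^ 2 * phiHat (κ / cs) n r

noncomputable def etaTil (κ cs cp : ℝ) (ℓ n : ℕ) (r : ℝ) : ℝ :=
  (-(ℓ : ℝ)) ^ (ℓ - 1) / (κ ^ 2 * r ^ 2) *
      sumChi n (fun j => phiTil (κ / cs) j r - 2 * phiF (κ / cs) j r
        + 2 * phiF (κ / cp) j r - phiTil (κ / cp) j r)
    + (-1 : ℝ) ^ (ℓ - 1) / cp ^ 2 * phiTil (κ / cp) n r
    + ((ℓ : ℝ) - 1) / cs ^ 2 * phiTil (κ / cs) n r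

noncomputable def xiTil (κ cs cp : ℝ) (ℓ n : ℕ) (r : ℝ) : ℝ :=
  (-(ℓ : ℝ)) ^ (ℓ - 1) / (κ ^ 2 * r ^ 2) *
      sumChi n (fun j => phiHatTil (κ / cs) j r - 2 * phiHat (κ / cs) j r
        + 2 * phiHat (κ / cp) j r - phiHatTil (κ / cp) j r)
    + (-1 : ℝ) ^ (ℓ - 1) / cp ^ 2 * phiHatTil (κ / cp) n r
    + ((ℓ : ℝ) - 1) / cs ^ 2 * phiHatTil (κ / cs) n r

lemma acoef_zero (γ : ℝ) (n : ℕ) : acoef γ n 0 = 1 := by rw [acoef]; simp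
lemma acoef_of_lt (γ : ℝ) {n m : ℕ} (h : n < m) : acoef γ n m = 0 := by
  rw [acoef]
  have : m ≠ 0 := by omega
  simp [this, h]
lemma sum_range_ext {f : ℕ → ℝ} {N M : ℕ} (h : N ≤ M) (hz : ∀ m, N ≤ m → f m = 0) :
    ∑ m ∈ Finset.range N, f m = ∑ m ∈ Finset.range M, f m :=
  Finset.sum_subset (Finset.range_subset_range.2 h) (fun x _ hx => hz x (by simpa using hx))
lemma hA (γ : ℝ) (j : ℕ) (r : ℝ) :
    vPol γ j r = 1 + ∑ i ∈ Finset.range (j+1), acoef γ j (2*i+2) * r^(2*i+2) := by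
  rw [vPol]
  rw [sum_range_ext (f := fun m => acoef γ j (2*m) * r^(2*m)) (M := j+2) (by omega)
    (fun m hm => by
      show acoef γ j (2*m) * r^(2*m) = 0
      rw [acoef_of_lt γ (by omega)]; ring)]
  rw [Finset.sum_range_succ']
  rw [acoef_zero]
  have hc : ∀ x ∈ Finset.range (j+1),
      acoef γ j (2*(x+1)) * r^(2*(x+1)) = acoef γ j (2*x+2) * r^(2*x+2) :=
    fun x _ => by rw [show 2*(x+1) = 2*x+2 by omega]
  rw [Finset.sum_congr rfl hc]
  ring
lemma hB (γ : ℝ) (j : ℕ) (r : ℝ) :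
    ∑ m ∈ Finset.Icc 1 (j / 2), (m : ℝ) * acoef γ j (2 * m) * r ^ (2 * m)
      = ∑ i ∈ Finset.range (j+1), ((i:ℝ)+1) * acoef γ j (2*i+2) * r^(2*i+2) := by
  rw [Finset.sum_subset (Finset.Icc_subset_Icc_right (show j/2 ≤ j+1 by omega))
    (fun x hx hx2 => by
      simp only [Finset.mem_Icc] at hx hx2
      rw [acoef_of_lt γ (by omega)]; ring)]
  rw [← Finset.Ico_add_one_right_eq_Icc, Finset.sum_Ico_eq_sum_range]
  apply Finset.sum_congr (by norm_num)
  intro i _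
  push_cast
  ring_nf
lemma hC (γ : ℝ) (j : ℕ) (r : ℝ) :
    ∑ m ∈ Finset.range ((j - 1) / 2 + 1), acoef γ j (2 * m + 1) * r ^ (2 * m + 2)
      = acoef γ j 1 * r^2 + ∑ i ∈ Finset.range (j+1), acoef γ j (2*i+3) * r^(2*i+4) := by
  rw [sum_range_ext (f := fun m => acoef γ j (2*m+1) * r^(2*m+2)) (M := j+2) (by omega)
    (fun m hm => by
      show acoef γ j (2*m+1) * r^(2*m+2) = 0
      rw [acoef_of_lt γ (by omega)]; ring)]
  rw [Finset.sum_range_succ']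
  have hc : ∀ x ∈ Finset.range (j+1),
      acoef γ j (2*(x+1)+1) * r^(2*(x+1)+2) = acoef γ j (2*x+3) * r^(2*x+4) :=
    fun x _ => by rw [show 2*(x+1)+1 = 2*x+3 by omega, show 2*(x+1)+2 = 2*x+4 by omega]
  rw [Finset.sum_congr rfl hc]
  ring
lemma hW (γ : ℝ) (j : ℕ) (r : ℝ) :
    wPol γ j r = acoef γ j 1 * r + ∑ i ∈ Finset.range (j+1), acoef γ j (2*i+3) * r^(2*i+3) := by
  rw [wPol]
  rw [sum_range_ext (f := fun m => acoef γ j (2*m+1) * r^(2*m+1)) (M := j+2) (by omega)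
    (fun m hm => by
      show acoef γ j (2*m+1) * r^(2*m+1) = 0
      rw [acoef_of_lt γ (by omega)]; ring)]
  rw [Finset.sum_range_succ']
  have hc : ∀ x ∈ Finset.range (j+1),
      acoef γ j (2*(x+1)+1) * r^(2*(x+1)+1) = acoef γ j (2*x+3) * r^(2*x+3) :=
    fun x _ => by rw [show 2*(x+1)+1 = 2*x+3 by omega]
  rw [Finset.sum_congr rfl hc]
  ring
lemma hBw (γ : ℝ) (j : ℕ) (r : ℝ) :
    ∑ m ∈ Finset.Icc 1 ((j-1) / 2), (m : ℝ) * acoef γ j (2 * m + 1) * r ^ (2 * m + 1)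
      = ∑ i ∈ Finset.range (j+1), ((i:ℝ)+1) * acoef γ j (2*i+3) * r^(2*i+3) := by
  rw [Finset.sum_subset (Finset.Icc_subset_Icc_right (show (j-1)/2 ≤ j+1 by omega))
    (fun x hx hx2 => by
      simp only [Finset.mem_Icc] at hx hx2
      rw [acoef_of_lt γ (by omega)]; ring)]
  rw [← Finset.Ico_add_one_right_eq_Icc, Finset.sum_Ico_eq_sum_range]
  apply Finset.sum_congr (by norm_num)
  intro i _
  push_cast
  ring_nf
lemma hG (γ : ℝ) (j : ℕ) (r : ℝ) :
    ∑ m ∈ Finset.range (j / 2 + 1), acoef γ j (2 * m) * r ^ (2 * m + 1)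
      = r + ∑ i ∈ Finset.range (j+1), acoef γ j (2*i+2) * r^(2*i+3) := by
  rw [sum_range_ext (f := fun m => acoef γ j (2*m) * r^(2*m+1)) (M := j+2) (by omega)
    (fun m hm => by
      show acoef γ j (2*m) * r^(2*m+1) = 0
      rw [acoef_of_lt γ (by omega)]; ring)]
  rw [Finset.sum_range_succ']
  rw [acoef_zero]
  have hc : ∀ x ∈ Finset.range (j+1),
      acoef γ j (2*(x+1)) * r^(2*(x+1)+1) = acoef γ j (2*x+2) * r^(2*x+3) :=
    fun x _ => by rw [show 2*(x+1) = 2*x+2 by omega, show 2*x+2+1 = 2*x+3 by omega]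
  rw [Finset.sum_congr rfl hc]
  ring
lemma P_eq (γ : ℝ) (j : ℕ) (r : ℝ) :
    vTil γ j r - 2 * vPol γ j r + 2 + γ * acoef γ j 1 * r^2
      = ∑ i ∈ Finset.range (j+1),
          ((2*(i:ℝ)+2) * acoef γ j (2*i+4) - γ * acoef γ j (2*i+3)) * r^(2*i+4) := by
  have step1 : vTil γ j r - 2 * vPol γ j r + 2 + γ * acoef γ j 1 * r^2
      = ∑ i ∈ Finset.range (j+1),
          (2*(((i:ℝ)+1) * acoef γ j (2*i+2) * r^(2*i+2))
            - γ*(acoef γ j (2*i+3) * r^(2*i+4))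
            - 2*(acoef γ j (2*i+2) * r^(2*i+2))) := by
    rw [vTil, hB, hC, hA]
    rw [Finset.sum_sub_distrib, Finset.sum_sub_distrib,
      ← Finset.mul_sum, ← Finset.mul_sum, ← Finset.mul_sum]
    ring
  rw [step1]
  have step2 : ∀ x ∈ Finset.range (j+1),
      (2*(((x:ℝ)+1) * acoef γ j (2*x+2) * r^(2*x+2))
        - γ*(acoef γ j (2*x+3) * r^(2*x+4))
        - 2*(acoef γ j (2*x+2) * r^(2*x+2)))
      = (x:ℝ)*(2 * acoef γ j (2*x+2) * r^(2*x+2)) - γ*(acoef γ j (2*x+3) * r^(2*x+4)) :=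
    fun x _ => by ring
  rw [Finset.sum_congr rfl step2, Finset.sum_sub_distrib]
  have step3 : ∑ i ∈ Finset.range (j+1), (i:ℝ)*(2 * acoef γ j (2*i+2) * r^(2*i+2))
      = ∑ i ∈ Finset.range (j+1), (2*(i:ℝ)+2) * acoef γ j (2*i+4) * r^(2*i+4) := by
    rw [Finset.sum_range_succ']
    have hc : ∀ x ∈ Finset.range j,
        ((x+1:ℕ):ℝ)*(2 * acoef γ j (2*(x+1)+2) * r^(2*(x+1)+2))
          = (2*(x:ℝ)+2) * acoef γ j (2*x+4) * r^(2*x+4) :=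
      fun x _ => by
        rw [show 2*(x+1)+2 = 2*x+4 by omega]
        push_cast
        ring
    rw [Finset.sum_congr rfl hc, Finset.sum_range_succ (n := j),
      acoef_of_lt γ (show j < 2*j+4 by omega)]
    push_cast
    ring
  rw [step3, ← Finset.sum_sub_distrib]
  apply Finset.sum_congr rfl
  intro i _
  ring
lemma Q_eq (γ : ℝ) (j : ℕ) (r : ℝ) :
    wTil γ j r - 2 * wPol γ j r + (γ + 2 * acoef γ j 1) * r + γ * acoef γ j 2 * r^3
      = ∑ i ∈ Finset.range j,
          ((2*(i:ℝ)+2) * acoef γ j (2*i+5) - γ * acoef γ j (2*i+4)) * r^(2*i+5) := by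
  have step1 : wTil γ j r - 2 * wPol γ j r + (γ + 2 * acoef γ j 1) * r + γ * acoef γ j 2 * r^3
      = (∑ i ∈ Finset.range (j+1),
          ((i:ℝ)*(2 * acoef γ j (2*i+3) * r^(2*i+3))
            - γ*(acoef γ j (2*i+2) * r^(2*i+3)))) + γ * acoef γ j 2 * r^3 := by
    have e : ∀ x ∈ Finset.range (j+1),
        (2*(((x:ℝ)+1) * acoef γ j (2*x+3) * r^(2*x+3))
          - γ*(acoef γ j (2*x+2) * r^(2*x+3))
          - 2*(acoef γ j (2*x+3) * r^(2*x+3)))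
        = (x:ℝ)*(2 * acoef γ j (2*x+3) * r^(2*x+3)) - γ*(acoef γ j (2*x+2) * r^(2*x+3)) :=
      fun x _ => by ring
    rw [wTil, hBw, hG, hW, ← Finset.sum_congr rfl e]
    rw [Finset.sum_sub_distrib, Finset.sum_sub_distrib,
      ← Finset.mul_sum, ← Finset.mul_sum, ← Finset.mul_sum]
    ring
  rw [step1, Finset.sum_range_succ']
  have hc : ∀ x ∈ Finset.range j,
      (((x+1:ℕ)):ℝ)*(2 * acoef γ j (2*(x+1)+3) * r^(2*(x+1)+3))
        - γ*(acoef γ j (2*(x+1)+2) * r^(2*(x+1)+3))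
      = ((2*(x:ℝ)+2) * acoef γ j (2*x+5) - γ * acoef γ j (2*x+4)) * r^(2*x+5) :=
    fun x _ => by
      rw [show 2*(x+1)+3 = 2*x+5 by omega, show 2*(x+1)+2 = 2*x+4 by omega]
      push_cast
      ring
  rw [Finset.sum_congr rfl hc]
  push_cast
  ring
lemma geo_sum : ∑' k : ℕ, ((1:ℝ)/4) ^ k = 4/3 := by
  rw [tsum_geometric_of_lt_one (by norm_num) (by norm_num)]; norm_num
lemma geo_summable : Summable (fun k : ℕ => ((1:ℝ)/4) ^ k) :=
  summable_geometric_of_lt_one (by norm_num) (by norm_num)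
lemma fact_ge_one (k : ℕ) : (1:ℝ) ≤ (k.factorial : ℝ) := by
  exact_mod_cast Nat.one_le_iff_ne_zero.2 (Nat.factorial_ne_zero k)
lemma zpow_le {z : ℝ} (h0 : 0 ≤ z) (h1 : z ≤ 1) (k : ℕ) : (z/2) ^ (2*k) ≤ ((1:ℝ)/4)^k := by
  rw [pow_mul]
  apply pow_le_pow_left₀ (by positivity)
  nlinarith
lemma I0_term_le {z : ℝ} (h0 : 0 ≤ z) (h1 : z ≤ 1) (k : ℕ) :
    (z / 2) ^ (2 * k) / ((k.factorial : ℝ)) ^ 2 ≤ ((1:ℝ)/4) ^ k := by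
  have h2 : (1:ℝ) ≤ (k.factorial : ℝ) ^ 2 := by nlinarith [fact_ge_one k]
  calc (z / 2) ^ (2 * k) / ((k.factorial : ℝ)) ^ 2 ≤ (z/2)^(2*k) / 1 := by
        apply div_le_div_of_nonneg_left ?_ ?_ h2 <;> positivity
    _ ≤ ((1:ℝ)/4)^k := by simpa using zpow_le h0 h1 k
lemma I1_term_le {z : ℝ} (h0 : 0 ≤ z) (h1 : z ≤ 1) (k : ℕ) :
    (z / 2) ^ (2 * k + 1) / ((k.factorial : ℝ) * ((k+1).factorial : ℝ)) ≤ (z/2) * ((1:ℝ)/4) ^ k := by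
  have h2 : (1:ℝ) ≤ (k.factorial : ℝ) * ((k+1).factorial : ℝ) := by
    nlinarith [fact_ge_one k, fact_ge_one (k+1)]
  calc (z / 2) ^ (2 * k + 1) / ((k.factorial : ℝ) * ((k+1).factorial : ℝ))
      ≤ (z/2)^(2*k+1) / 1 := by
        apply div_le_div_of_nonneg_left ?_ ?_ h2 <;> positivity
    _ = (z/2) * (z/2)^(2*k) := by ring
    _ ≤ (z/2) * ((1:ℝ)/4)^k := by
        apply mul_le_mul_of_nonneg_left (zpow_le h0 h1 k) (by positivity)
lemma I0_summable {z : ℝ} (h0 : 0 ≤ z) (h1 : z ≤ 1) :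
    Summable (fun k : ℕ => (z / 2) ^ (2 * k) / (k.factorial : ℝ) ^ 2) :=
  Summable.of_nonneg_of_le (fun k => by positivity) (I0_term_le h0 h1) geo_summable
lemma I1_summable {z : ℝ} (h0 : 0 ≤ z) (h1 : z ≤ 1) :
    Summable (fun k : ℕ => (z / 2) ^ (2 * k + 1) / ((k.factorial : ℝ) * ((k+1).factorial : ℝ))) :=
  Summable.of_nonneg_of_le (fun k => by positivity) (I1_term_le h0 h1)
    (geo_summable.mul_left (z/2))
lemma I0_nonneg {z : ℝ} (h0 : 0 ≤ z) (h1 : z ≤ 1) : 0 ≤ besselI0 z :=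
  tsum_nonneg (fun k => by positivity)
lemma I0_le_two {z : ℝ} (h0 : 0 ≤ z) (h1 : z ≤ 1) : besselI0 z ≤ 2 := by
  have := Summable.tsum_le_tsum (I0_term_le h0 h1) (I0_summable h0 h1) geo_summable
  rw [geo_sum] at this
  rw [besselI0]
  linarith [this]
lemma I1_nonneg {z : ℝ} (h0 : 0 ≤ z) (h1 : z ≤ 1) : 0 ≤ besselI1 z :=
  tsum_nonneg (fun k => by positivity)
lemma I1_le {z : ℝ} (h0 : 0 ≤ z) (h1 : z ≤ 1) : besselI1 z ≤ z := by
  have := Summable.tsum_le_tsum (I1_term_le h0 h1) (I1_summable h0 h1) (geo_summable.mul_left (z/2))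
  rw [tsum_mul_left, geo_sum] at this
  calc besselI1 z ≤ z/2 * (4/3) := this
    _ ≤ z := by linarith
lemma I0_expand {z : ℝ} (h0 : 0 ≤ z) (h1 : z ≤ 1) :
    ∃ T : ℝ, besselI0 z = 1 + z^2/4 + T ∧ 0 ≤ T ∧ T ≤ z^4 := by
  have hs := I0_summable h0 h1
  have h1s : Summable (fun k : ℕ => (z / 2) ^ (2 * (k+1)) / ((k+1).factorial : ℝ) ^ 2) := by
    exact_mod_cast (summable_nat_add_iff 1).2 hs
  have h2s : Summable (fun k : ℕ => (z / 2) ^ (2 * (k+2)) / ((k+2).factorial : ℝ) ^ 2) := by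
    exact_mod_cast (summable_nat_add_iff 1).2 h1s
  have e1 : besselI0 z = 1 + ∑' k : ℕ, (z / 2) ^ (2 * (k+1)) / ((k+1).factorial : ℝ) ^ 2 := by
    rw [besselI0, Summable.tsum_eq_zero_add hs]; norm_num
  have e2 : (∑' k : ℕ, (z / 2) ^ (2 * (k+1)) / ((k+1).factorial : ℝ) ^ 2)
      = z^2/4 + ∑' k : ℕ, (z / 2) ^ (2 * (k+2)) / ((k+2).factorial : ℝ) ^ 2 := by
    rw [Summable.tsum_eq_zero_add h1s]
    congr 1
    norm_num
    ring
  refine ⟨∑' k : ℕ, (z / 2) ^ (2 * (k+2)) / ((k+2).factorial : ℝ) ^ 2,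
    by rw [e1, e2]; ring, tsum_nonneg (fun k => by positivity), ?_⟩
  have hb : ∀ k : ℕ, (z / 2) ^ (2 * (k+2)) / ((k+2).factorial : ℝ) ^ 2 ≤ z^4/16 * ((1:ℝ)/4)^k := by
    intro k
    have h2 : (1:ℝ) ≤ ((k+2).factorial : ℝ) ^ 2 := by nlinarith [fact_ge_one (k+2)]
    calc (z / 2) ^ (2 * (k+2)) / ((k+2).factorial : ℝ) ^ 2 ≤ (z/2)^(2*(k+2)) / 1 := by
          apply div_le_div_of_nonneg_left ?_ ?_ h2 <;> positivity
      _ = z^4/16 * (z/2)^(2*k) := by ring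
      _ ≤ z^4/16 * ((1:ℝ)/4)^k := by
          apply mul_le_mul_of_nonneg_left (zpow_le h0 h1 k) (by positivity)
  have := Summable.tsum_le_tsum hb h2s ((geo_summable.mul_left (z^4/16)))
  rw [tsum_mul_left, geo_sum] at this
  nlinarith [this, pow_nonneg h0 4]
lemma I1_expand {z : ℝ} (h0 : 0 ≤ z) (h1 : z ≤ 1) :
    ∃ T : ℝ, besselI1 z = z/2 + T ∧ 0 ≤ T ∧ T ≤ z^3 := by
  have hs := I1_summable h0 h1
  have h1s : Summable (fun k : ℕ => (z / 2) ^ (2 * (k+1) + 1) /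
      (((k+1).factorial : ℝ) * ((k+2).factorial : ℝ))) := by
    have := (summable_nat_add_iff (f := fun k : ℕ => (z / 2) ^ (2 * k + 1) /
      ((k.factorial : ℝ) * ((k+1).factorial : ℝ))) 1).2 hs
    convert this using 2 with k
  have e1 : besselI1 z = z/2 + ∑' k : ℕ, (z / 2) ^ (2 * (k+1) + 1) /
      (((k+1).factorial : ℝ) * ((k+2).factorial : ℝ)) := by
    rw [besselI1, Summable.tsum_eq_zero_add hs]
    congr 1
    norm_num [Nat.factorial]
  refine ⟨∑' k : ℕ, (z / 2) ^ (2 * (k+1) + 1) /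
      (((k+1).factorial : ℝ) * ((k+2).factorial : ℝ)),
    e1, tsum_nonneg (fun k => by positivity), ?_⟩
  have hb : ∀ k : ℕ, (z / 2) ^ (2 * (k+1) + 1) / (((k+1).factorial : ℝ) * ((k+2).factorial : ℝ))
      ≤ z^3/8 * ((1:ℝ)/4)^k := by
    intro k
    have h2 : (1:ℝ) ≤ ((k+1).factorial : ℝ) * ((k+2).factorial : ℝ) := by
      nlinarith [fact_ge_one (k+1), fact_ge_one (k+2)]
    calc (z / 2) ^ (2 * (k+1)+1) / (((k+1).factorial : ℝ) * ((k+2).factorial : ℝ))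
        ≤ (z/2)^(2*(k+1)+1) / 1 := by
          apply div_le_div_of_nonneg_left ?_ ?_ h2 <;> positivity
      _ = z^3/8 * (z/2)^(2*k) := by ring
      _ ≤ z^3/8 * ((1:ℝ)/4)^k := by
          apply mul_le_mul_of_nonneg_left (zpow_le h0 h1 k) (by positivity)
  have := Summable.tsum_le_tsum hb h1s ((geo_summable.mul_left (z^3/8)))
  rw [tsum_mul_left, geo_sum] at this
  nlinarith [this, pow_nonneg h0 3]
lemma sum_high_bound (s : Finset ℕ) (c : ℕ → ℝ) (e : ℕ → ℕ) (d : ℕ)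
    (he : ∀ i ∈ s, d ≤ e i) {r : ℝ} (h0 : 0 ≤ r) (h1 : r ≤ 1) :
    |∑ i ∈ s, c i * r ^ e i| ≤ (∑ i ∈ s, |c i|) * r ^ d := by
  calc |∑ i ∈ s, c i * r ^ e i| ≤ ∑ i ∈ s, |c i * r ^ e i| := Finset.abs_sum_le_sum_abs _ _
    _ = ∑ i ∈ s, |c i| * r ^ e i := by
        apply Finset.sum_congr rfl; intro i _
        rw [abs_mul, abs_of_nonneg (pow_nonneg h0 _)]
    _ ≤ ∑ i ∈ s, |c i| * r ^ d := by
        apply Finset.sum_le_sum; intro i hi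
        exact mul_le_mul_of_nonneg_left (pow_le_pow_of_le_one h0 h1 (he i hi)) (abs_nonneg _)
    _ = (∑ i ∈ s, |c i|) * r ^ d := by rw [Finset.sum_mul]
lemma tri (x y : ℝ) : |x - y| ≤ |x| + |y| := by
  rw [sub_eq_add_neg]
  exact (abs_add_le _ _).trans (by rw [abs_neg])
set_option maxHeartbeats 1000000 in
lemma Dbound (γ : ℝ) (hγ : 0 < γ) (j : ℕ) :
    ∃ C, 0 ≤ C ∧ ∀ r : ℝ, 0 < r → r ≤ 1 → γ * r ≤ 1 →
      |phiTil γ j r - 2 * phiF γ j r - 2| ≤ C * r ^ 4 := by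
  have hCP : (0:ℝ) ≤ ∑ i ∈ Finset.range (j+1),
      |(2*(i:ℝ)+2) * acoef γ j (2*i+4) - γ * acoef γ j (2*i+3)| :=
    Finset.sum_nonneg fun i _ => abs_nonneg _
  have hCQ : (0:ℝ) ≤ ∑ i ∈ Finset.range j,
      |(2*(i:ℝ)+2) * acoef γ j (2*i+5) - γ * acoef γ j (2*i+4)| :=
    Finset.sum_nonneg fun i _ => abs_nonneg _
  refine ⟨3*(∑ i ∈ Finset.range (j+1),
      |(2*(i:ℝ)+2) * acoef γ j (2*i+4) - γ * acoef γ j (2*i+3)|)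
    + 2*(∑ i ∈ Finset.range j,
      |(2*(i:ℝ)+2) * acoef γ j (2*i+5) - γ * acoef γ j (2*i+4)|)
    + (2*γ^4 + γ^3 * |acoef γ j 1| / 4 + γ^5 * |acoef γ j 1| + (γ+2 * |acoef γ j 1|)*γ^3
        + γ^2 * |acoef γ j 2| / 2 + γ^4 * |acoef γ j 2|), ?_, ?_⟩
  · have : (0:ℝ) ≤ 2*γ^4 + γ^3 * |acoef γ j 1| / 4 + γ^5 * |acoef γ j 1| + (γ+2 * |acoef γ j 1|)*γ^3
        + γ^2 * |acoef γ j 2| / 2 + γ^4 * |acoef γ j 2| := by positivity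
    linarith
  intro r hr hr1 hzr
  have hz0 : (0:ℝ) ≤ γ * r := by positivity
  obtain ⟨T0, hI0, hT0n, hT0⟩ := I0_expand hz0 hzr
  obtain ⟨T1, hI1, hT1n, hT1⟩ := I1_expand hz0 hzr
  have hT0' : T0 ≤ γ^4 * r^4 := by calc T0 ≤ (γ*r)^4 := hT0
                                      _ = γ^4*r^4 := by ring
  have hT1' : T1 ≤ γ^3 * r^3 := by calc T1 ≤ (γ*r)^3 := hT1
                                      _ = γ^3*r^3 := by ring
  have hz2 : (γ*r)^2 ≤ 1 := pow_le_one₀ hz0 hzr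
  have hz3 : (γ*r)^3 ≤ 1 := pow_le_one₀ hz0 hzr
  have hz4 : (γ*r)^4 ≤ 1 := pow_le_one₀ hz0 hzr
  have hr64 : r^6 ≤ r^4 := pow_le_pow_of_le_one hr.le hr1 (by norm_num)
  have hPb : |vTil γ j r - 2 * vPol γ j r + 2 + γ * acoef γ j 1 * r^2|
      ≤ (∑ i ∈ Finset.range (j+1),
          |(2*(i:ℝ)+2) * acoef γ j (2*i+4) - γ * acoef γ j (2*i+3)|) * r^4 := by
    rw [P_eq]
    exact sum_high_bound _ _ (fun i => 2*i+4) 4 (fun i _ => by show _ ≤ 2*i+_; omega) hr.le hr1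
  have hQb : |wTil γ j r - 2 * wPol γ j r + (γ + 2*acoef γ j 1) * r + γ * acoef γ j 2 * r^3|
      ≤ (∑ i ∈ Finset.range j,
          |(2*(i:ℝ)+2) * acoef γ j (2*i+5) - γ * acoef γ j (2*i+4)|) * r^4 := by
    rw [Q_eq]
    exact sum_high_bound _ _ (fun i => 2*i+5) 4 (fun i _ => by show _ ≤ 2*i+_; omega) hr.le hr1
  have key : phiTil γ j r - 2 * phiF γ j r - 2
      = -(1 + (γ*r)^2/4 + T0) * (vTil γ j r - 2*vPol γ j r + 2 + γ*acoef γ j 1*r^2)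
        + (γ*r/2 + T1) * (wTil γ j r - 2*wPol γ j r + (γ+2*acoef γ j 1)*r + γ*acoef γ j 2*r^3)
        + (2*T0 + γ^3*acoef γ j 1*r^4/4 + γ*acoef γ j 1*r^2*T0 - (γ + 2*acoef γ j 1)*r*T1
            - γ^2*acoef γ j 2*r^4/2 - γ*acoef γ j 2*r^3*T1) := by
    rw [phiTil, phiF, hI0, hI1]; ring
  rw [key]
  have e1 : |-(1 + (γ*r)^2/4 + T0) * (vTil γ j r - 2*vPol γ j r + 2 + γ*acoef γ j 1*r^2)|
      ≤ 3 * ((∑ i ∈ Finset.range (j+1),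
          |(2*(i:ℝ)+2) * acoef γ j (2*i+4) - γ * acoef γ j (2*i+3)|) * r^4) := by
    rw [abs_mul, abs_neg, abs_of_nonneg (by nlinarith)]
    apply mul_le_mul (by nlinarith) hPb (abs_nonneg _) (by norm_num)
  have e2 : |(γ*r/2 + T1) * (wTil γ j r - 2*wPol γ j r + (γ+2*acoef γ j 1)*r + γ*acoef γ j 2*r^3)|
      ≤ 2 * ((∑ i ∈ Finset.range j,
          |(2*(i:ℝ)+2) * acoef γ j (2*i+5) - γ * acoef γ j (2*i+4)|) * r^4) := by
    rw [abs_mul, abs_of_nonneg (by nlinarith)]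
    apply mul_le_mul (by nlinarith) hQb (abs_nonneg _) (by norm_num)
  have b1 : |2*T0| ≤ 2*γ^4*r^4 := by
    rw [abs_of_nonneg (by linarith)]; linarith
  have b2 : |γ^3*acoef γ j 1*r^4/4| ≤ γ^3*|acoef γ j 1| / 4 * r^4 := by
    rw [show γ^3*acoef γ j 1*r^4/4 = (γ^3*r^4/4)*acoef γ j 1 by ring, abs_mul,
      abs_of_nonneg (by positivity)]
    apply le_of_eq; ring
  have b3 : |γ*acoef γ j 1*r^2*T0| ≤ γ^5 * |acoef γ j 1| * r^4 := by
    rw [show γ*acoef γ j 1*r^2*T0 = (γ*r^2*T0)*acoef γ j 1 by ring, abs_mul,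
      abs_of_nonneg (by positivity)]
    have h5 : γ*r^2*T0 ≤ γ^5*r^4 := by
      calc γ*r^2*T0 ≤ γ*r^2*(γ^4*r^4) := by
            exact mul_le_mul_of_nonneg_left hT0' (by positivity)
        _ = γ^5*(r^6) := by ring
        _ ≤ γ^5*r^4 := mul_le_mul_of_nonneg_left hr64 (by positivity)
    calc γ*r^2*T0 * |acoef γ j 1| ≤ γ^5*r^4 * |acoef γ j 1| :=
          mul_le_mul_of_nonneg_right h5 (abs_nonneg _)
      _ = γ^5 * |acoef γ j 1| * r^4 := by ring
  have b4 : |(γ + 2*acoef γ j 1)*r*T1| ≤ (γ+2 * |acoef γ j 1|)*γ^3*r^4 := by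
    rw [abs_mul, abs_mul]
    have h1 : |γ+2*acoef γ j 1| ≤ γ+2 * |acoef γ j 1| := by
      calc |γ+2*acoef γ j 1| ≤ |γ| + |2*acoef γ j 1| := abs_add_le _ _
        _ = γ + 2 * |acoef γ j 1| := by rw [abs_of_pos hγ, abs_mul]; norm_num
    rw [abs_of_pos hr, abs_of_nonneg hT1n]
    calc |γ+2*acoef γ j 1| * r * T1 ≤ (γ+2 * |acoef γ j 1|)*r*(γ^3*r^3) := by
          apply mul_le_mul (mul_le_mul h1 le_rfl hr.le (by positivity)) hT1' hT1n (by positivity)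
      _ = (γ+2 * |acoef γ j 1|)*γ^3*(r^4) := by ring
  have b5 : |γ^2*acoef γ j 2*r^4/2| ≤ γ^2*|acoef γ j 2| / 2 * r^4 := by
    rw [show γ^2*acoef γ j 2*r^4/2 = (γ^2*r^4/2)*acoef γ j 2 by ring, abs_mul,
      abs_of_nonneg (by positivity)]
    apply le_of_eq; ring
  have b6 : |γ*acoef γ j 2*r^3*T1| ≤ γ^4 * |acoef γ j 2| * r^4 := by
    rw [show γ*acoef γ j 2*r^3*T1 = (γ*r^3*T1)*acoef γ j 2 by ring, abs_mul,
      abs_of_nonneg (by positivity)]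
    have h5 : γ*r^3*T1 ≤ γ^4*r^4 := by
      calc γ*r^3*T1 ≤ γ*r^3*(γ^3*r^3) := mul_le_mul_of_nonneg_left hT1' (by positivity)
        _ = γ^4*(r^6) := by ring
        _ ≤ γ^4*r^4 := mul_le_mul_of_nonneg_left hr64 (by positivity)
    calc γ*r^3*T1 * |acoef γ j 2| ≤ γ^4*r^4 * |acoef γ j 2| :=
          mul_le_mul_of_nonneg_right h5 (abs_nonneg _)
      _ = γ^4 * |acoef γ j 2| * r^4 := by ring
  have e3 : |2*T0 + γ^3*acoef γ j 1*r^4/4 + γ*acoef γ j 1*r^2*T0 - (γ + 2*acoef γ j 1)*r*T1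
      - γ^2*acoef γ j 2*r^4/2 - γ*acoef γ j 2*r^3*T1|
      ≤ (2*γ^4 + γ^3 * |acoef γ j 1| / 4 + γ^5 * |acoef γ j 1| + (γ+2 * |acoef γ j 1|)*γ^3
          + γ^2 * |acoef γ j 2| / 2 + γ^4 * |acoef γ j 2|) * r^4 := by
    have t1 := tri (2*T0 + γ^3*acoef γ j 1*r^4/4 + γ*acoef γ j 1*r^2*T0
      - (γ + 2*acoef γ j 1)*r*T1 - γ^2*acoef γ j 2*r^4/2) (γ*acoef γ j 2*r^3*T1)
    have t2 := tri (2*T0 + γ^3*acoef γ j 1*r^4/4 + γ*acoef γ j 1*r^2*T0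
      - (γ + 2*acoef γ j 1)*r*T1) (γ^2*acoef γ j 2*r^4/2)
    have t3 := tri (2*T0 + γ^3*acoef γ j 1*r^4/4 + γ*acoef γ j 1*r^2*T0)
      ((γ + 2*acoef γ j 1)*r*T1)
    have t4 := abs_add_le (2*T0 + γ^3*acoef γ j 1*r^4/4) (γ*acoef γ j 1*r^2*T0)
    have t5 := abs_add_le (2*T0) (γ^3*acoef γ j 1*r^4/4)
    nlinarith [b1, b2, b3, b4, b5, b6]
  calc |(-(1 + (γ*r)^2/4 + T0) * (vTil γ j r - 2*vPol γ j r + 2 + γ*acoef γ j 1*r^2))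
        + ((γ*r/2 + T1) * (wTil γ j r - 2*wPol γ j r + (γ+2*acoef γ j 1)*r + γ*acoef γ j 2*r^3))
        + (2*T0 + γ^3*acoef γ j 1*r^4/4 + γ*acoef γ j 1*r^2*T0 - (γ + 2*acoef γ j 1)*r*T1
            - γ^2*acoef γ j 2*r^4/2 - γ*acoef γ j 2*r^3*T1)|
      ≤ |(-(1 + (γ*r)^2/4 + T0) * (vTil γ j r - 2*vPol γ j r + 2 + γ*acoef γ j 1*r^2))
        + ((γ*r/2 + T1) * (wTil γ j r - 2*wPol γ j r + (γ+2*acoef γ j 1)*r + γ*acoef γ j 2*r^3))|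
        + |2*T0 + γ^3*acoef γ j 1*r^4/4 + γ*acoef γ j 1*r^2*T0 - (γ + 2*acoef γ j 1)*r*T1
            - γ^2*acoef γ j 2*r^4/2 - γ*acoef γ j 2*r^3*T1| := abs_add_le _ _
    _ ≤ _ := by
        have := abs_add_le (-(1 + (γ*r)^2/4 + T0) * (vTil γ j r - 2*vPol γ j r + 2 + γ*acoef γ j 1*r^2))
          ((γ*r/2 + T1) * (wTil γ j r - 2*wPol γ j r + (γ+2*acoef γ j 1)*r + γ*acoef γ j 2*r^3))
        nlinarith [e1, e2, e3]
set_option maxHeartbeats 1000000 in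
lemma Tbound (γ : ℝ) (hγ : 0 < γ) (j : ℕ) :
    ∃ C, 0 ≤ C ∧ ∀ r : ℝ, 0 < r → r ≤ 1 → γ * r ≤ 1 →
      |phiTil γ j r| ≤ C * r ^ 2 := by
  have hCB : (0:ℝ) ≤ ∑ i ∈ Finset.range (j+1), |((i:ℝ)+1) * acoef γ j (2*i+2)| :=
    Finset.sum_nonneg fun i _ => abs_nonneg _
  have hCC : (0:ℝ) ≤ ∑ i ∈ Finset.range (j+1), |acoef γ j (2*i+3)| :=
    Finset.sum_nonneg fun i _ => abs_nonneg _
  have hCBW : (0:ℝ) ≤ ∑ i ∈ Finset.range (j+1), |((i:ℝ)+1) * acoef γ j (2*i+3)| :=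
    Finset.sum_nonneg fun i _ => abs_nonneg _
  have hCG : (0:ℝ) ≤ ∑ i ∈ Finset.range (j+1), |acoef γ j (2*i+2)| :=
    Finset.sum_nonneg fun i _ => abs_nonneg _
  refine ⟨2 * (2 * (∑ i ∈ Finset.range (j+1), |((i:ℝ)+1) * acoef γ j (2*i+2)|)
      + γ * (|acoef γ j 1| + (∑ i ∈ Finset.range (j+1), |acoef γ j (2*i+3)|)))
    + γ * (2 * (∑ i ∈ Finset.range (j+1), |((i:ℝ)+1) * acoef γ j (2*i+3)|)
      + γ * (1 + (∑ i ∈ Finset.range (j+1), |acoef γ j (2*i+2)|))), ?_, ?_⟩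
  · have h1 : (0:ℝ) ≤ |acoef γ j 1| := abs_nonneg _
    positivity
  intro r hr hr1 hzr
  have hz0 : (0:ℝ) ≤ γ * r := by positivity
  -- bound on vTil
  have hv : vTil γ j r = 2 * (∑ i ∈ Finset.range (j+1), ((i:ℝ)+1) * acoef γ j (2*i+2) * r^(2*i+2))
      - γ * (acoef γ j 1 * r^2 + ∑ i ∈ Finset.range (j+1), acoef γ j (2*i+3) * r^(2*i+4)) := by
    rw [vTil, hB, hC]
  have hb1 : |∑ i ∈ Finset.range (j+1), ((i:ℝ)+1) * acoef γ j (2*i+2) * r^(2*i+2)|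
      ≤ (∑ i ∈ Finset.range (j+1), |((i:ℝ)+1) * acoef γ j (2*i+2)|) * r^2 :=
    sum_high_bound _ _ (fun i => 2*i+2) 2 (fun i _ => by show _ ≤ 2*i+_; omega) hr.le hr1
  have hb2 : |acoef γ j 1 * r^2 + ∑ i ∈ Finset.range (j+1), acoef γ j (2*i+3) * r^(2*i+4)|
      ≤ (|acoef γ j 1| + (∑ i ∈ Finset.range (j+1), |acoef γ j (2*i+3)|)) * r^2 := by
    have h1 : |∑ i ∈ Finset.range (j+1), acoef γ j (2*i+3) * r^(2*i+4)|
        ≤ (∑ i ∈ Finset.range (j+1), |acoef γ j (2*i+3)|) * r^2 :=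
      sum_high_bound _ _ (fun i => 2*i+4) 2 (fun i _ => by show _ ≤ 2*i+_; omega) hr.le hr1
    have h2 : |acoef γ j 1 * r^2| = |acoef γ j 1| * r^2 := by
      rw [abs_mul, abs_of_nonneg (show (0:ℝ) ≤ r^2 by positivity)]
    calc |acoef γ j 1 * r^2 + ∑ i ∈ Finset.range (j+1), acoef γ j (2*i+3) * r^(2*i+4)|
        ≤ |acoef γ j 1 * r^2| + |∑ i ∈ Finset.range (j+1), acoef γ j (2*i+3) * r^(2*i+4)| :=
          abs_add_le _ _
      _ ≤ |acoef γ j 1| * r^2 + (∑ i ∈ Finset.range (j+1), |acoef γ j (2*i+3)|) * r^2 := by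
          rw [h2]; linarith
      _ = (|acoef γ j 1| + (∑ i ∈ Finset.range (j+1), |acoef γ j (2*i+3)|)) * r^2 := by ring
  have hvb : |vTil γ j r| ≤ (2 * (∑ i ∈ Finset.range (j+1), |((i:ℝ)+1) * acoef γ j (2*i+2)|)
      + γ * (|acoef γ j 1| + (∑ i ∈ Finset.range (j+1), |acoef γ j (2*i+3)|))) * r^2 := by
    rw [hv]
    calc |2 * (∑ i ∈ Finset.range (j+1), ((i:ℝ)+1) * acoef γ j (2*i+2) * r^(2*i+2))
        - γ * (acoef γ j 1 * r^2 + ∑ i ∈ Finset.range (j+1), acoef γ j (2*i+3) * r^(2*i+4))|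
        ≤ |2 * (∑ i ∈ Finset.range (j+1), ((i:ℝ)+1) * acoef γ j (2*i+2) * r^(2*i+2))|
          + |γ * (acoef γ j 1 * r^2 + ∑ i ∈ Finset.range (j+1), acoef γ j (2*i+3) * r^(2*i+4))| :=
          tri _ _
      _ ≤ 2 * ((∑ i ∈ Finset.range (j+1), |((i:ℝ)+1) * acoef γ j (2*i+2)|) * r^2)
          + γ * ((|acoef γ j 1| + (∑ i ∈ Finset.range (j+1), |acoef γ j (2*i+3)|)) * r^2) := by
          rw [abs_mul, abs_mul, abs_of_pos hγ, abs_of_nonneg (by norm_num : (0:ℝ) ≤ 2)]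
          have := mul_le_mul_of_nonneg_left hb1 (by norm_num : (0:ℝ) ≤ 2)
          have := mul_le_mul_of_nonneg_left hb2 hγ.le
          linarith
      _ = _ := by ring
  -- bound on wTil
  have hw : wTil γ j r = 2 * (∑ i ∈ Finset.range (j+1), ((i:ℝ)+1) * acoef γ j (2*i+3) * r^(2*i+3))
      - γ * (r + ∑ i ∈ Finset.range (j+1), acoef γ j (2*i+2) * r^(2*i+3)) := by
    rw [wTil, hBw, hG]
  have hc1 : |∑ i ∈ Finset.range (j+1), ((i:ℝ)+1) * acoef γ j (2*i+3) * r^(2*i+3)|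
      ≤ (∑ i ∈ Finset.range (j+1), |((i:ℝ)+1) * acoef γ j (2*i+3)|) * r^1 :=
    sum_high_bound _ _ (fun i => 2*i+3) 1 (fun i _ => by show _ ≤ 2*i+_; omega) hr.le hr1
  have hc2 : |∑ i ∈ Finset.range (j+1), acoef γ j (2*i+2) * r^(2*i+3)|
      ≤ (∑ i ∈ Finset.range (j+1), |acoef γ j (2*i+2)|) * r^1 :=
    sum_high_bound _ _ (fun i => 2*i+3) 1 (fun i _ => by show _ ≤ 2*i+_; omega) hr.le hr1
  have hwb : |wTil γ j r| ≤ (2 * (∑ i ∈ Finset.range (j+1), |((i:ℝ)+1) * acoef γ j (2*i+3)|)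
      + γ * (1 + (∑ i ∈ Finset.range (j+1), |acoef γ j (2*i+2)|))) * r := by
    rw [hw]
    have h3 : |r + ∑ i ∈ Finset.range (j+1), acoef γ j (2*i+2) * r^(2*i+3)|
        ≤ (1 + (∑ i ∈ Finset.range (j+1), |acoef γ j (2*i+2)|)) * r := by
      calc |r + ∑ i ∈ Finset.range (j+1), acoef γ j (2*i+2) * r^(2*i+3)|
          ≤ |r| + |∑ i ∈ Finset.range (j+1), acoef γ j (2*i+2) * r^(2*i+3)| := abs_add_le _ _
        _ ≤ r + (∑ i ∈ Finset.range (j+1), |acoef γ j (2*i+2)|) * r^1 := by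
            rw [abs_of_pos hr]; linarith
        _ = (1 + (∑ i ∈ Finset.range (j+1), |acoef γ j (2*i+2)|)) * r := by ring
    calc |2 * (∑ i ∈ Finset.range (j+1), ((i:ℝ)+1) * acoef γ j (2*i+3) * r^(2*i+3))
        - γ * (r + ∑ i ∈ Finset.range (j+1), acoef γ j (2*i+2) * r^(2*i+3))|
        ≤ |2 * (∑ i ∈ Finset.range (j+1), ((i:ℝ)+1) * acoef γ j (2*i+3) * r^(2*i+3))|
          + |γ * (r + ∑ i ∈ Finset.range (j+1), acoef γ j (2*i+2) * r^(2*i+3))| := tri _ _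
      _ ≤ 2 * ((∑ i ∈ Finset.range (j+1), |((i:ℝ)+1) * acoef γ j (2*i+3)|) * r^1)
          + γ * ((1 + (∑ i ∈ Finset.range (j+1), |acoef γ j (2*i+2)|)) * r) := by
          rw [abs_mul, abs_mul, abs_of_pos hγ, abs_of_nonneg (by norm_num : (0:ℝ) ≤ 2)]
          have := mul_le_mul_of_nonneg_left hc1 (by norm_num : (0:ℝ) ≤ 2)
          have := mul_le_mul_of_nonneg_left h3 hγ.le
          linarith
      _ = _ := by ring
  -- assemble
  have hI0b := I0_le_two hz0 hzr
  have hI0n := I0_nonneg hz0 hzr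
  have hI1b := I1_le hz0 hzr
  have hI1n := I1_nonneg hz0 hzr
  rw [phiTil]
  calc |-besselI0 (γ*r) * vTil γ j r + besselI1 (γ*r) * wTil γ j r|
      ≤ |besselI0 (γ*r)| * |vTil γ j r| + |besselI1 (γ*r)| * |wTil γ j r| := by
        have := abs_add_le (-besselI0 (γ*r) * vTil γ j r) (besselI1 (γ*r) * wTil γ j r)
        rw [abs_mul, abs_mul, abs_neg] at this
        exact this
    _ ≤ 2 * ((2 * (∑ i ∈ Finset.range (j+1), |((i:ℝ)+1) * acoef γ j (2*i+2)|)
          + γ * (|acoef γ j 1| + (∑ i ∈ Finset.range (j+1), |acoef γ j (2*i+3)|))) * r^2)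
        + (γ * r) * ((2 * (∑ i ∈ Finset.range (j+1), |((i:ℝ)+1) * acoef γ j (2*i+3)|)
          + γ * (1 + (∑ i ∈ Finset.range (j+1), |acoef γ j (2*i+2)|))) * r) := by
        apply add_le_add
        · apply mul_le_mul (by rw [abs_of_nonneg hI0n]; exact hI0b) hvb (abs_nonneg _)
            (by norm_num)
        · apply mul_le_mul (by rw [abs_of_nonneg hI1n]; exact hI1b) hwb (abs_nonneg _)
            (by positivity)
    _ = _ := by ring

/-- η̃_{ℓ,n}(r) = O(r²) as r → 0⁺, for ℓ ∈ {1,2}. -/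
theorem etaTil_asymptotics (κ cs cp : ℝ) (hκ : 0 < κ) (hcs : 0 < cs) (hcp : 0 < cp)
    (n : ℕ) (ℓ : ℕ) (hℓ : ℓ = 1 ∨ ℓ = 2) :
    (∃ ε > (0 : ℝ), ∃ M > (0 : ℝ), ∀ r : ℝ, 0 < r → r < ε →
      |etaTil κ cs cp ℓ n r| ≤ M * r ^ 2) ∧
    Tendsto (fun r => etaTil κ cs cp ℓ n r) (nhdsWithin 0 (Set.Ioi 0)) (nhds 0) := by
  
    have hγs : 0 < κ/cs := by positivity
    have hγp : 0 < κ/cp := by positivity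
    choose CDs hCDs0 hCDs using fun j => Dbound (κ/cs) hγs j
    choose CDp hCDp0 hCDp using fun j => Dbound (κ/cp) hγp j
    obtain ⟨CTs, hCTs0, hCTs⟩ := Tbound (κ/cs) hγs n
    obtain ⟨CTp, hCTp0, hCTp⟩ := Tbound (κ/cp) hγp n
    have hCC0 : (0:ℝ) ≤ ∑ j ∈ Finset.range (n+3), (CDs j + CDp j) :=
      Finset.sum_nonneg fun j _ => add_nonneg (hCDs0 j) (hCDp0 j)
    have hMchi0 : (0:ℝ) ≤ ∑ k ∈ Finset.Icc (-2:ℤ) 2, |chiC n k| :=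
      Finset.sum_nonneg fun k _ => abs_nonneg _
    set CC := ∑ j ∈ Finset.range (n+3), (CDs j + CDp j) with hCCdef
    set Mchi := ∑ k ∈ Finset.Icc (-2:ℤ) 2, |chiC n k| with hMchidef
    set M := 2 * Mchi * CC / κ^2 + CTp/cp^2 + CTs/cs^2 + 1 with hMdef
    set ε := min 1 (min (cs/κ) (cp/κ)) with hεdef
    have hε0 : 0 < ε := by
      apply lt_min (by norm_num)
      exact lt_min (by positivity) (by positivity)
    have hM0 : 0 < M := by
      have h1 : (0:ℝ) ≤ 2 * Mchi * CC / κ^2 := by positivity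
      have h2 : (0:ℝ) ≤ CTp/cp^2 := by positivity
      have h3 : (0:ℝ) ≤ CTs/cs^2 := by positivity
      rw [hMdef]; linarith
    have main : ∀ r : ℝ, 0 < r → r < ε → |etaTil κ cs cp ℓ n r| ≤ M * r ^ 2 := by
      intro r hr hrε
      have hr1 : r ≤ 1 := le_of_lt (lt_of_lt_of_le hrε (min_le_left _ _))
      have hrs : r ≤ cs/κ :=
        le_of_lt (lt_of_lt_of_le hrε ((min_le_right _ _).trans (min_le_left _ _)))
      have hrp : r ≤ cp/κ :=
        le_of_lt (lt_of_lt_of_le hrε ((min_le_right _ _).trans (min_le_right _ _)))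
      have hzs : (κ/cs) * r ≤ 1 := by
        have h := mul_le_mul_of_nonneg_left hrs hγs.le
        have he : (κ/cs) * (cs/κ) = 1 := by field_simp
        linarith
      have hzp : (κ/cp) * r ≤ 1 := by
        have h := mul_le_mul_of_nonneg_left hrp hγp.le
        have he : (κ/cp) * (cp/κ) = 1 := by field_simp
        linarith
      have hf : ∀ j, j < n+3 →
          |phiTil (κ/cs) j r - 2 * phiF (κ/cs) j r + 2 * phiF (κ/cp) j r - phiTil (κ/cp) j r|
            ≤ CC * r^4 := by
        intro j hj
        have e : phiTil (κ/cs) j r - 2 * phiF (κ/cs) j r + 2 * phiF (κ/cp) j r - phiTil (κ/cp) j r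
            = (phiTil (κ/cs) j r - 2 * phiF (κ/cs) j r - 2)
              - (phiTil (κ/cp) j r - 2 * phiF (κ/cp) j r - 2) := by ring
        rw [e]
        calc |(phiTil (κ/cs) j r - 2 * phiF (κ/cs) j r - 2)
              - (phiTil (κ/cp) j r - 2 * phiF (κ/cp) j r - 2)|
            ≤ |phiTil (κ/cs) j r - 2 * phiF (κ/cs) j r - 2|
              + |phiTil (κ/cp) j r - 2 * phiF (κ/cp) j r - 2| := tri _ _
          _ ≤ CDs j * r^4 + CDp j * r^4 :=
              add_le_add (hCDs j r hr hr1 hzs) (hCDp j r hr hr1 hzp)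
          _ = (CDs j + CDp j) * r^4 := by ring
          _ ≤ CC * r^4 := by
              apply mul_le_mul_of_nonneg_right ?_ (by positivity)
              exact Finset.single_le_sum (f := fun j => CDs j + CDp j)
                (fun i _ => add_nonneg (hCDs0 i) (hCDp0 i)) (Finset.mem_range.2 hj)
      have hsum : |sumChi n (fun j => phiTil (κ/cs) j r - 2 * phiF (κ/cs) j r
            + 2 * phiF (κ/cp) j r - phiTil (κ/cp) j r)| ≤ Mchi * (CC * r^4) := by
        rw [sumChi]
        calc |∑ k ∈ Finset.Icc (-2:ℤ) 2, if 0 ≤ (n:ℤ) + k then chiC n k *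
                (phiTil (κ/cs) ((n:ℤ)+k).toNat r - 2 * phiF (κ/cs) ((n:ℤ)+k).toNat r
                  + 2 * phiF (κ/cp) ((n:ℤ)+k).toNat r - phiTil (κ/cp) ((n:ℤ)+k).toNat r) else 0|
            ≤ ∑ k ∈ Finset.Icc (-2:ℤ) 2, |if 0 ≤ (n:ℤ) + k then chiC n k *
                (phiTil (κ/cs) ((n:ℤ)+k).toNat r - 2 * phiF (κ/cs) ((n:ℤ)+k).toNat r
                  + 2 * phiF (κ/cp) ((n:ℤ)+k).toNat r - phiTil (κ/cp) ((n:ℤ)+k).toNat r) else 0| :=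
              Finset.abs_sum_le_sum_abs _ _
          _ ≤ ∑ k ∈ Finset.Icc (-2:ℤ) 2, |chiC n k| * (CC * r^4) := by
              apply Finset.sum_le_sum
              intro k hk
              simp only [Finset.mem_Icc] at hk
              by_cases h : 0 ≤ (n:ℤ) + k
              · rw [if_pos h, abs_mul]
                apply mul_le_mul_of_nonneg_left ?_ (abs_nonneg _)
                exact hf _ (by omega)
              · rw [if_neg h, abs_zero]
                exact mul_nonneg (abs_nonneg _) (by positivity)
          _ = Mchi * (CC * r^4) := by rw [← Finset.sum_mul]
      have habs1 : |(-(ℓ:ℝ))^(ℓ-1)| ≤ 2 := by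
        rcases hℓ with h | h <;> subst h <;> norm_num
      have habs2 : |(-1:ℝ)^(ℓ-1)| = 1 := by
        rcases hℓ with h | h <;> subst h <;> norm_num
      have habs3 : |((ℓ:ℝ)-1)| ≤ 1 := by
        rcases hℓ with h | h <;> subst h <;> norm_num
      have hκr : (0:ℝ) < κ^2 * r^2 := by positivity
      rw [etaTil]
      have t1b : |(-(ℓ:ℝ)) ^ (ℓ - 1) / (κ ^ 2 * r ^ 2) *
            sumChi n (fun j => phiTil (κ / cs) j r - 2 * phiF (κ / cs) j r
              + 2 * phiF (κ / cp) j r - phiTil (κ / cp) j r)|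
          ≤ 2 / (κ^2 * r^2) * (Mchi * (CC * r^4)) := by
        rw [abs_mul, abs_div, abs_of_pos hκr]
        apply mul_le_mul ?_ hsum (abs_nonneg _) (by positivity)
        gcongr
      have t2b : |(-1:ℝ) ^ (ℓ - 1) / cp ^ 2 * phiTil (κ / cp) n r|
          ≤ 1 / cp^2 * (CTp * r^2) := by
        rw [abs_mul, abs_div, habs2, abs_of_pos (pow_pos hcp 2)]
        apply mul_le_mul le_rfl (hCTp r hr hr1 hzp) (abs_nonneg _) (by positivity)
      have t3b : |((ℓ:ℝ) - 1) / cs ^ 2 * phiTil (κ / cs) n r|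
          ≤ 1 / cs^2 * (CTs * r^2) := by
        rw [abs_mul, abs_div, abs_of_pos (pow_pos hcs 2)]
        apply mul_le_mul ?_ (hCTs r hr hr1 hzs) (abs_nonneg _) (by positivity)
        gcongr
      have heq : 2 / (κ^2 * r^2) * (Mchi * (CC * r^4)) = 2 * Mchi * CC / κ^2 * r^2 := by
        field_simp
      have tria : ∀ x y z : ℝ, |x + y + z| ≤ |x| + |y| + |z| := by
        intro x y z
        calc |x + y + z| ≤ |x + y| + |z| := abs_add_le _ _
          _ ≤ |x| + |y| + |z| := by have := abs_add_le x y; linarith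
      calc |(-(ℓ:ℝ)) ^ (ℓ - 1) / (κ ^ 2 * r ^ 2) *
            sumChi n (fun j => phiTil (κ / cs) j r - 2 * phiF (κ / cs) j r
              + 2 * phiF (κ / cp) j r - phiTil (κ / cp) j r)
            + (-1:ℝ) ^ (ℓ - 1) / cp ^ 2 * phiTil (κ / cp) n r
            + ((ℓ:ℝ) - 1) / cs ^ 2 * phiTil (κ / cs) n r|
          ≤ |(-(ℓ:ℝ)) ^ (ℓ - 1) / (κ ^ 2 * r ^ 2) *
            sumChi n (fun j => phiTil (κ / cs) j r - 2 * phiF (κ / cs) j r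
              + 2 * phiF (κ / cp) j r - phiTil (κ / cp) j r)|
            + |(-1:ℝ) ^ (ℓ - 1) / cp ^ 2 * phiTil (κ / cp) n r|
            + |((ℓ:ℝ) - 1) / cs ^ 2 * phiTil (κ / cs) n r| := tria _ _ _
        _ ≤ 2 / (κ^2 * r^2) * (Mchi * (CC * r^4)) + 1 / cp^2 * (CTp * r^2)
            + 1 / cs^2 * (CTs * r^2) := add_le_add (add_le_add t1b t2b) t3b
        _ ≤ M * r^2 := by
            rw [hMdef, heq]
            have expand : 2*Mchi*CC/κ^2*r^2 + 1/cp^2*(CTp*r^2) + 1/cs^2*(CTs*r^2) + r^2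
                = (2*Mchi*CC/κ^2 + CTp/cp^2 + CTs/cs^2 + 1)*r^2 := by ring
            linarith [sq_nonneg r, expand]
    refine ⟨⟨ε, hε0, M, hM0, main⟩, ?_⟩
    apply squeeze_zero_norm' (a := fun r => M * r^2)
    · filter_upwards [Ioo_mem_nhdsGT_of_mem (Set.left_mem_Ico.2 hε0)] with r hr
      rw [Real.norm_eq_abs]
      exact main r hr.1 hr.2
    · have h1 : Filter.Tendsto (fun r : ℝ => M * r^2) (nhds 0) (nhds (M * 0^2)) :=
        (continuous_const.mul (continuous_pow 2)).tendsto 0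
      have h2 : M * (0:ℝ)^2 = 0 := by norm_num
      rw [h2] at h1
      exact h1.mono_left nhdsWithin_le_nhds
end
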